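/- (Lemma 'equiv', type C_n^{(1)}.) Suppose in addition that λ is C_n-dominant, i.e., λ_1 ≥ λ_2 ≥ ⋯ ≥ λ_n ≥ 0. Then the following are equivalent: (1) P_i^{(a)}(ν) ≥ 0 for every 1 ≤ a ≤ n−1 and every integer i ≥ 1, and P_i^{(n)}(ν) ≥ 0 for every even integer i ≥ 2; (2) P_i^{(a)}(ν) ≥ 0 for every 1 ≤ a ≤ n and every i in the corresponding index set such that m_i(ν^{(a)}) > 0. -/
import Mathlib


/-!
STATEMENT 16: Lemma 'equiv', type C_n^{(1)}.
-/

namespace OSS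

/-- `Q i τ = Σ_{t ∈ τ} min(t, i)`. -/
def Q (i : ℚ) (τ : Multiset ℚ) : ℚ := (τ.map (fun t => min t i)).sum

/-- Vacancy numbers of type `C_n^{(1)}` (with `ν 0 = ∅` assumed). -/
def P (n L : ℕ) (ν : ℕ → Multiset ℚ) (a : ℕ) (i : ℚ) : ℚ :=
  if a = n then Q i (ν (n - 1)) - Q i (ν n)
  else
    Q i (ν (a - 1)) - 2 * Q i (ν a) + Q i (ν (a + 1))
      + (L : ℚ) * min i 1 * (if a = 1 then 1 else 0)

lemma min_concave {t j i k : ℚ} (hji : j ≤ i) (hik : i ≤ k) :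
    (k - i) * min t j + (i - j) * min t k ≤ (k - j) * min t i := by
  rcases le_total t j with h1 | h1
  · rw [min_eq_left h1, min_eq_left (h1.trans hji), min_eq_left ((h1.trans hji).trans hik)]
    ring_nf
    rfl
  · rw [min_eq_right h1]
    rcases le_total t i with h2 | h2
    · rw [min_eq_left h2, min_eq_left (h2.trans hik)]
      nlinarith
    · rw [min_eq_right h2]
      rcases le_total t k with h3 | h3
      · rw [min_eq_left h3]; nlinarith
      · rw [min_eq_right h3]; nlinarith

lemma min_affine_of {t j i k : ℚ} (h : t ≤ j ∨ k ≤ t) (hji : j ≤ i) (hik : i ≤ k) :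
    (k - i) * min t j + (i - j) * min t k = (k - j) * min t i := by
  rcases h with h | h
  · rw [min_eq_left h, min_eq_left (h.trans hji), min_eq_left ((h.trans hji).trans hik)]; ring
  · rw [min_eq_right (hji.trans (hik.trans h)), min_eq_right h,
      min_eq_right (hik.trans h)]; ring

lemma Q_zero {τ : Multiset ℚ} (h : ∀ t ∈ τ, 0 ≤ t) : Q 0 τ = 0 := by
  induction τ using Multiset.induction with
  | empty => simp [Q]
  | cons x s ih =>
    simp only [Q, Multiset.map_cons, Multiset.sum_cons] at *
    rw [min_eq_right (h x (by simp)), ih (fun t ht => h t (by simp [ht]))]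
    ring

lemma Q_sum {i : ℚ} {τ : Multiset ℚ} (h : ∀ t ∈ τ, t ≤ i) : Q i τ = τ.sum := by
  induction τ using Multiset.induction with
  | empty => simp [Q]
  | cons x s ih =>
    simp only [Q, Multiset.map_cons, Multiset.sum_cons] at *
    rw [min_eq_left (h x (by simp)), ih (fun t ht => h t (by simp [ht]))]

lemma Q_concave {τ : Multiset ℚ} {j i k : ℚ} (hji : j ≤ i) (hik : i ≤ k) :
    (k - i) * Q j τ + (i - j) * Q k τ ≤ (k - j) * Q i τ := by
  induction τ using Multiset.induction with
  | empty => simp [Q]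
  | cons x s ih =>
    simp only [Q, Multiset.map_cons, Multiset.sum_cons] at *
    have := min_concave (t := x) hji hik
    nlinarith

lemma Q_affine {τ : Multiset ℚ} {j i k : ℚ} (hji : j ≤ i) (hik : i ≤ k)
    (h : ∀ t ∈ τ, t ≤ j ∨ k ≤ t) :
    (k - i) * Q j τ + (i - j) * Q k τ = (k - j) * Q i τ := by
  induction τ using Multiset.induction with
  | empty => simp [Q]
  | cons x s ih =>
    simp only [Q, Multiset.map_cons, Multiset.sum_cons] at *
    have := min_affine_of (h x (by simp)) hji hik
    have h2 := ih (fun t ht => h t (by simp [ht]))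
    ring_nf at *
    linarith

lemma P_interval (n L : ℕ) (ν : ℕ → Multiset ℚ) (a : ℕ)
    {j i k : ℚ} (hji : j ≤ i) (hik : i ≤ k) (hjk : j < k)
    (havoid : ∀ t ∈ ν a, t ≤ j ∨ k ≤ t)
    (hPj : 0 ≤ P n L ν a j) (hPk : 0 ≤ P n L ν a k) : 0 ≤ P n L ν a i := by
  have hsjk : (0:ℚ) < k - j := by linarith
  have hA : (0:ℚ) ≤ k - i := by linarith
  have hB : (0:ℚ) ≤ i - j := by linarith
  unfold P at *
  split_ifs at * with h h'
  · subst h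
    have h1 := Q_concave (τ := ν (a - 1)) hji hik
    have h2 := Q_affine (τ := ν a) hji hik havoid
    have key : (k - i) * (Q j (ν (a - 1)) - Q j (ν a)) + (i - j) * (Q k (ν (a - 1)) - Q k (ν a))
        ≤ (k - j) * (Q i (ν (a - 1)) - Q i (ν a)) := by linarith
    nlinarith [key, mul_nonneg hA hPj, mul_nonneg hB hPk]
  · have h1 := Q_concave (τ := ν (a - 1)) hji hik
    have h2 := Q_affine (τ := ν a) hji hik havoid
    have h3 := Q_concave (τ := ν (a + 1)) hji hik
    have h4 : (k - i) * min j 1 + (i - j) * min k 1 ≤ (k - j) * min i 1 := by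
      simpa [min_comm] using min_concave (t := (1:ℚ)) hji hik
    have hL : (0:ℚ) ≤ (L:ℚ) := Nat.cast_nonneg L
    have h4' := mul_le_mul_of_nonneg_left h4 hL
    have key : (k - i) * (Q j (ν (a - 1)) - 2 * Q j (ν a) + Q j (ν (a + 1)) + (L:ℚ) * min j 1 * 1)
        + (i - j) * (Q k (ν (a - 1)) - 2 * Q k (ν a) + Q k (ν (a + 1)) + (L:ℚ) * min k 1 * 1)
        ≤ (k - j) * (Q i (ν (a - 1)) - 2 * Q i (ν a) + Q i (ν (a + 1)) + (L:ℚ) * min i 1 * 1) := by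
      nlinarith [h1, h2, h3, h4']
    nlinarith [key, mul_nonneg hA hPj, mul_nonneg hB hPk]
  · have h1 := Q_concave (τ := ν (a - 1)) hji hik
    have h2 := Q_affine (τ := ν a) hji hik havoid
    have h3 := Q_concave (τ := ν (a + 1)) hji hik
    simp only [mul_zero, add_zero] at *
    have key : (k - i) * (Q j (ν (a - 1)) - 2 * Q j (ν a) + Q j (ν (a + 1)))
        + (i - j) * (Q k (ν (a - 1)) - 2 * Q k (ν a) + Q k (ν (a + 1)))
        ≤ (k - j) * (Q i (ν (a - 1)) - 2 * Q i (ν a) + Q i (ν (a + 1))) := by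
      nlinarith [h1, h2, h3]
    nlinarith [key, mul_nonneg hA hPj, mul_nonneg hB hPk]

lemma P_zero (n L : ℕ) (ν : ℕ → Multiset ℚ) (a : ℕ)
    (h0 : ∀ t ∈ ν (a - 1), 0 ≤ t) (h1 : ∀ t ∈ ν a, 0 ≤ t) (h2 : ∀ t ∈ ν (a + 1), 0 ≤ t)
    (h3 : ∀ t ∈ ν (n - 1), 0 ≤ t) (h4 : ∀ t ∈ ν n, 0 ≤ t) :
    P n L ν a 0 = 0 := by
  unfold P
  split_ifs with h h'
  · rw [Q_zero h3, Q_zero h4]; ring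
  all_goals rw [Q_zero h0, Q_zero h1, Q_zero h2]; norm_num

lemma P_zero_n (n L : ℕ) (ν : ℕ → Multiset ℚ)
    (h3 : ∀ t ∈ ν (n - 1), 0 ≤ t) (h4 : ∀ t ∈ ν n, 0 ≤ t) :
    P n L ν n 0 = 0 := by
  unfold P
  rw [if_pos rfl, Q_zero h3, Q_zero h4]
  ring

lemma P_top (n L : ℕ) (hn : 2 ≤ n) (lam : ℕ → ℤ) (ν : ℕ → Multiset ℚ)
    (hν0 : ν 0 = 0)
    (hsize : ∀ a, 1 ≤ a → a ≤ n →
      (ν a).sum = (L : ℚ) - ∑ b ∈ Finset.Icc 1 a, (lam b : ℚ))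
    (hdom : ∀ a, 1 ≤ a → a ≤ n - 1 → lam (a + 1) ≤ lam a)
    (hdom' : 0 ≤ lam n)
    (a : ℕ) (ha1 : 1 ≤ a) (ha2 : a ≤ n) (M : ℚ) (hM1 : 1 ≤ M)
    (hMa : ∀ b, b ≤ n → ∀ t ∈ ν b, t ≤ M) : 0 ≤ P n L ν a M := by
  have hstep : ∀ c, 1 ≤ c → c + 1 ≤ n → (ν c).sum - (ν (c+1)).sum = (lam (c+1) : ℚ) := by
    intro c hc1 hc2
    rw [hsize c hc1 (by omega), hsize (c+1) (by omega) hc2,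
      Finset.sum_Icc_succ_top (by omega : 1 ≤ c + 1)]
    ring
  unfold P
  split_ifs with h h'
  · subst h
    rw [Q_sum (hMa (a-1) (by omega)), Q_sum (hMa a le_rfl)]
    have h1 := hstep (a-1) (by omega) (by omega)
    have h2 : a - 1 + 1 = a := by omega
    rw [h2] at h1
    have : (0:ℚ) ≤ (lam a : ℚ) := by exact_mod_cast hdom'
    linarith
  · subst h'
    rw [Q_sum (hMa 0 (by omega)), Q_sum (hMa 1 (by omega)), Q_sum (hMa 2 (by omega))]
    have h1 := hstep 1 le_rfl (by omega)
    have h2 := hsize 1 le_rfl (by omega)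
    rw [Finset.Icc_self, Finset.sum_singleton] at h2
    have h3 : (lam 2 : ℚ) ≤ (lam 1 : ℚ) := by exact_mod_cast hdom 1 le_rfl (by omega)
    rw [hν0]
    rw [min_eq_right hM1]
    simp only [Multiset.sum_zero, mul_one]
    linarith
  · obtain ⟨c, rfl⟩ : ∃ c, a = c + 1 := ⟨a - 1, by omega⟩
    have hc1 : 1 ≤ c := by omega
    simp only [Nat.add_sub_cancel]
    rw [Q_sum (hMa c (by omega)), Q_sum (hMa (c+1) (by omega)), Q_sum (hMa (c+2) (by omega))]
    have h1 := hstep c hc1 (by omega)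
    have h2 := hstep (c+1) (by omega) (by omega)
    have h3 : (lam (c+2) : ℚ) ≤ (lam (c+1) : ℚ) := by
      exact_mod_cast hdom (c+1) (by omega) (by omega)
    simp only [mul_zero, add_zero]
    have hcc : c + 1 + 1 = c + 2 := rfl
    rw [hcc] at *
    linarith

lemma P_nonneg_aux (n L : ℕ) (ν : ℕ → Multiset ℚ) (a : ℕ)
    (i : ℚ) (hi0 : 0 < i)
    (hP0 : P n L ν a 0 = 0)
    (M : ℚ) (hiM : i ≤ M)
    (hPM : 0 ≤ P n L ν a M)
    (hiν : i ∉ ν a)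
    (hPparts : ∀ t ∈ ν a, 0 ≤ P n L ν a t) :
    0 ≤ P n L ν a i := by
  set F : Finset ℚ := insert 0 ((ν a).toFinset.filter (· < i)) with hF
  have hFne : F.Nonempty := ⟨0, Finset.mem_insert_self _ _⟩
  set j := F.max' hFne with hj
  have hjF : j ∈ F := F.max'_mem hFne
  have hji : j < i := by
    rw [hF] at hjF
    rcases Finset.mem_insert.1 hjF with h | h
    · rw [h]; exact hi0
    · exact (Finset.mem_filter.1 h).2
  have hPj : 0 ≤ P n L ν a j := by
    rw [hF] at hjF
    rcases Finset.mem_insert.1 hjF with h | h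
    · rw [h, hP0]
    · exact hPparts j (Multiset.mem_toFinset.1 (Finset.mem_filter.1 h).1)
  have hjle : ∀ t ∈ ν a, t < i → t ≤ j :=
    fun t ht hti => F.le_max' t (Finset.mem_insert_of_mem
      (Finset.mem_filter.2 ⟨Multiset.mem_toFinset.2 ht, hti⟩))
  set G : Finset ℚ := (ν a).toFinset.filter (i < ·) with hG
  by_cases hGne : G.Nonempty
  · set k := G.min' hGne with hk
    have hkG : k ∈ G := G.min'_mem hGne
    have hik : i < k := (Finset.mem_filter.1 hkG).2
    have hkν : k ∈ ν a := Multiset.mem_toFinset.1 (Finset.mem_filter.1 hkG).1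
    refine P_interval n L ν a hji.le hik.le (hji.trans hik) ?_ hPj (hPparts k hkν)
    intro t ht
    rcases lt_trichotomy t i with h | h | h
    · exact Or.inl (hjle t ht h)
    · exact absurd (h ▸ ht) hiν
    · exact Or.inr (G.min'_le t (Finset.mem_filter.2 ⟨Multiset.mem_toFinset.2 ht, h⟩))
  · refine P_interval n L ν a hji.le hiM (hji.trans_le hiM) ?_ hPj hPM
    intro t ht
    left
    refine hjle t ht ?_
    rcases lt_trichotomy t i with h | h | h
    · exact h
    · exact absurd (h ▸ ht) hiν
    · exact absurd ⟨t, Finset.mem_filter.2 ⟨Multiset.mem_toFinset.2 ht, h⟩⟩ hGne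

theorem vacancy_nonneg_iff_C (n L : ℕ) (hn : 2 ≤ n) (lam : ℕ → ℤ) (ν : ℕ → Multiset ℚ)
    (hν0 : ν 0 = 0)
    (hparts : ∀ a, 1 ≤ a → a ≤ n - 1 → ∀ t ∈ ν a, ∃ k : ℤ, 0 < k ∧ t = (k : ℚ))
    (hpartsn : ∀ t ∈ ν n, ∃ k : ℤ, 0 < k ∧ t = 2 * (k : ℚ))
    (hsize : ∀ a, 1 ≤ a → a ≤ n →
      (ν a).sum = (L : ℚ) - ∑ b ∈ Finset.Icc 1 a, (lam b : ℚ))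
    (hdom : ∀ a, 1 ≤ a → a ≤ n - 1 → lam (a + 1) ≤ lam a)
    (hdom' : 0 ≤ lam n)
    :
    ((∀ a, 1 ≤ a → a ≤ n - 1 → ∀ i : ℤ, 1 ≤ i → 0 ≤ P n L ν a (i : ℚ)) ∧
      (∀ i : ℤ, 2 ≤ i → Even i → 0 ≤ P n L ν n (i : ℚ))) ↔
    ((∀ a, 1 ≤ a → a ≤ n - 1 → ∀ i : ℤ, 1 ≤ i →
        0 < (ν a).count (i : ℚ) → 0 ≤ P n L ν a (i : ℚ)) ∧
      (∀ i : ℤ, 2 ≤ i → Even i →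
        0 < (ν n).count (i : ℚ) → 0 ≤ P n L ν n (i : ℚ))) := by
  constructor
  · rintro ⟨hA, hB⟩
    exact ⟨fun a h1 h2 i hi _ => hA a h1 h2 i hi, fun i hi he _ => hB i hi he⟩
  · rintro ⟨hA, hB⟩
    have hposall : ∀ b, b ≤ n → ∀ t ∈ ν b, 0 < t := by
      intro b hb t ht
      rcases Nat.eq_zero_or_pos b with rfl | hb1
      · rw [hν0] at ht; simp at ht
      rcases eq_or_lt_of_le hb with rfl | hbn
      · obtain ⟨k, hk, rfl⟩ := hpartsn t ht
        have : (0:ℚ) < (k:ℚ) := by exact_mod_cast hk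
        linarith
      · obtain ⟨k, hk, rfl⟩ := hparts b hb1 (by omega) t ht
        exact_mod_cast hk
    have hpos0 : ∀ b, b ≤ n → ∀ t ∈ ν b, 0 ≤ t := fun b hb t ht => (hposall b hb t ht).le
    set S : ℚ := ∑ b ∈ Finset.range (n+1), (ν b).sum with hS
    have hbound : ∀ b, b ≤ n → ∀ t ∈ ν b, t ≤ S := by
      intro b hb t ht
      have h1 : t ≤ (ν b).sum := Multiset.single_le_sum (hpos0 b hb) t ht
      have h2 : (ν b).sum ≤ S := by
        rw [hS]
        refine Finset.single_le_sum (f := fun b => (ν b).sum) ?_ (by simp; omega)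
        intro c hc
        exact Multiset.sum_nonneg (hpos0 c (by simp at hc; omega))
      linarith
    constructor
    · intro a ha1 ha2 i hi
      by_cases hc : 0 < (ν a).count (i:ℚ)
      · exact hA a ha1 ha2 i hi hc
      have hiν : (i:ℚ) ∉ ν a := by
        rw [← Multiset.count_pos] at *; omega
      have hi0 : (0:ℚ) < (i:ℚ) := by exact_mod_cast lt_of_lt_of_le one_pos hi
      set M : ℚ := 1 + (i:ℚ) + S with hM
      have hS0 : (0:ℚ) ≤ S := Finset.sum_nonneg fun c hc =>
        Multiset.sum_nonneg (hpos0 c (by simp at hc; omega))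
      have hM1 : (1:ℚ) ≤ M := by rw [hM]; linarith
      have hMa : ∀ b, b ≤ n → ∀ t ∈ ν b, t ≤ M := by
        intro b hb t ht
        have := hbound b hb t ht
        rw [hM]; linarith
      refine P_nonneg_aux n L ν a (i:ℚ) hi0 ?_ M (by rw [hM]; linarith) ?_ hiν ?_
      · exact P_zero n L ν a (hpos0 (a-1) (by omega)) (hpos0 a (by omega))
          (hpos0 (a+1) (by omega)) (hpos0 (n-1) (by omega)) (hpos0 n le_rfl)
      · exact P_top n L hn lam ν hν0 hsize hdom hdom' a ha1 (by omega) M hM1 hMa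
      · intro t ht
        obtain ⟨k, hk, rfl⟩ := hparts a ha1 ha2 t ht
        exact hA a ha1 ha2 k hk (Multiset.count_pos.2 ht)
    · intro i hi hev
      by_cases hc : 0 < (ν n).count (i:ℚ)
      · exact hB i hi hev hc
      have hiν : (i:ℚ) ∉ ν n := by
        rw [← Multiset.count_pos] at *; omega
      have hi0 : (0:ℚ) < (i:ℚ) := by
        have : (0:ℤ) < i := by omega
        exact_mod_cast this
      set M : ℚ := 1 + (i:ℚ) + S with hM
      have hS0 : (0:ℚ) ≤ S := Finset.sum_nonneg fun c hc =>
        Multiset.sum_nonneg (hpos0 c (by simp at hc; omega))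
      have hM1 : (1:ℚ) ≤ M := by rw [hM]; linarith
      have hMa : ∀ b, b ≤ n → ∀ t ∈ ν b, t ≤ M := by
        intro b hb t ht
        have := hbound b hb t ht
        rw [hM]; linarith
      refine P_nonneg_aux n L ν n (i:ℚ) hi0 ?_ M (by rw [hM]; linarith) ?_ hiν ?_
      · exact P_zero_n n L ν (hpos0 (n-1) (by omega)) (hpos0 n le_rfl)
      · exact P_top n L hn lam ν hν0 hsize hdom hdom' n (by omega) le_rfl M hM1 hMa
      · intro t ht
        obtain ⟨k, hk, rfl⟩ := hpartsn t ht
        have h2k : ((2*k : ℤ) : ℚ) = 2 * (k:ℚ) := by push_cast; ring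
        rw [← h2k] at ht ⊢
        exact hB (2*k) (by omega) (even_two_mul k) (Multiset.count_pos.2 ht)

end OSS
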